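/- Let X be a random positive semi-definite d×d real matrix satisfying E[X²] ⪯ Σ₂ for a positive semi-definite matrix Σ₂ (as follows from Bernstein's moment condition with p = 2). Then for all u ≥ 0, log E[exp(−uX)] ⪯ −u·E[X] + (u²/2)·Σ₂, where exp and log denote the matrix exponential and logarithm and ⪯ the Loewner order. -/

import Mathlib

open MeasureTheory ProbabilityTheory Matrix
open scoped Matrix.Norms.L2Operator

noncomputable section

/-- The `ℓ`-th largest eigenvalue of a matrix (0-indexed: `eigval A 0` is the largest
eigenvalue), defined for Hermitian matrices via the sorted eigenvalue sequence. -/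
def eigval {d : ℕ} (A : Matrix (Fin d) (Fin d) ℝ) (ℓ : Fin d) : ℝ :=
  if h : A.IsHermitian then (h.eigenvalues ∘ Tuple.sort h.eigenvalues) ℓ.rev else 0

/-- `ξ` is a random vector with centered multivariate normal distribution `N_d(0, C)`:
every linear functional `⟨a, ξ⟩` is a centered real Gaussian with variance `aᵀ C a`. -/
def IsGaussianVec {Ω : Type*} [MeasurableSpace Ω] (P : Measure Ω) {d : ℕ}
    (ξ : Ω → (Fin d → ℝ)) (C : Matrix (Fin d) (Fin d) ℝ) : Prop :=
  Measurable ξ ∧ ∀ a : Fin d → ℝ,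
    P.map (fun ω => a ⬝ᵥ ξ ω) = gaussianReal 0 (a ⬝ᵥ C.mulVec a).toNNReal

/-- Outer product `x xᵀ` of a vector with itself. -/
def outer {d : ℕ} (x : Fin d → ℝ) : Matrix (Fin d) (Fin d) ℝ := Matrix.vecMulVec x x

/-- Entrywise expectation of a random matrix. -/
def mExp {Ω : Type*} [MeasurableSpace Ω] (P : Measure Ω) {d : ℕ}
    (X : Ω → Matrix (Fin d) (Fin d) ℝ) : Matrix (Fin d) (Fin d) ℝ :=
  Matrix.of fun i j => ∫ ω, X ω i j ∂P

/-- Loewner order: `A ⪯ B` iff `B - A` is positive semidefinite. -/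
def LoewnerLE {d : ℕ} (A B : Matrix (Fin d) (Fin d) ℝ) : Prop := (B - A).PosSemidef

/-- Matrix exponential of a Hermitian matrix (via the functional calculus). -/
def matExp {d : ℕ} (A : Matrix (Fin d) (Fin d) ℝ) : Matrix (Fin d) (Fin d) ℝ :=
  if h : A.IsHermitian then h.cfc Real.exp else 0

/-- Matrix logarithm of a (positive definite) Hermitian matrix (via the functional calculus). -/
def matLog {d : ℕ} (A : Matrix (Fin d) (Fin d) ℝ) : Matrix (Fin d) (Fin d) ℝ :=
  if h : A.IsHermitian then h.cfc Real.log else 0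

instance matrixMeasurableSpace {d : ℕ} : MeasurableSpace (Matrix (Fin d) (Fin d) ℝ) :=
  (inferInstance : MeasurableSpace (Fin d → Fin d → ℝ))

end
set_option linter.unusedSectionVars false
set_option maxHeartbeats 1000000

open MeasureTheory Set Filter

/-! ### Scalar auxiliary lemmas -/

lemma exp_le_quadratic {y : ℝ} (hy : y ≤ 0) : Real.exp y ≤ 1 + y + (1/2) * (y * y) := by
  set φ : ℝ → ℝ := fun y => 1 + y + (1/2) * (y * y) - Real.exp y with hφ
  have hderiv : ∀ x : ℝ, HasDerivAt φ (1 + x - Real.exp x) x := by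
    intro x
    have h1 : HasDerivAt (fun y : ℝ => 1 + y) 1 x := (hasDerivAt_id x).const_add 1
    have h2 : HasDerivAt (fun y : ℝ => (1/2) * (y * y)) x x := by
      have := ((hasDerivAt_id x).mul (hasDerivAt_id x)).const_mul (1/2 : ℝ)
      simpa using this.congr_deriv (by simp; ring)
    have h3 := (h1.add h2).sub (Real.hasDerivAt_exp x)
    exact h3.congr_deriv (by ring)
  have hanti : AntitoneOn φ (Set.Iic 0) := by
    apply antitoneOn_of_deriv_nonpos (convex_Iic 0)
    · exact Continuous.continuousOn (by
        have : Continuous φ := by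
          apply Continuous.sub
          · continuity
          · exact Real.continuous_exp
        exact this)
    · exact fun x hx => (hderiv x).differentiableAt.differentiableWithinAt
    · intro x hx
      have hd := (hderiv x).deriv
      have := Real.add_one_le_exp x
      calc deriv φ x = 1 + x - Real.exp x := hd
        _ ≤ 0 := by linarith
  have h0 : φ 0 ≤ φ y := hanti (Set.mem_Iic.mpr hy) (Set.mem_Iic.mpr le_rfl) hy
  have : φ 0 = 0 := by simp [hφ]
  rw [this] at h0
  simp only [hφ] at h0
  linarith

lemma log_deriv_aux {x : ℝ} (hx : 0 < x) (t : ℝ) (ht : t ∈ Ici (0:ℝ)) :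
    HasDerivAt (fun s => Real.log (1 + s) - Real.log (x + s))
      ((1 + t)⁻¹ - (x + t)⁻¹) t := by
  have h1 : (0:ℝ) < 1 + t := by have := ht.out; linarith
  have h2 : (0:ℝ) < x + t := by have := ht.out; linarith
  have d1 : HasDerivAt (fun s : ℝ => Real.log (1 + s)) (1 + t)⁻¹ t := by
    have := (Real.hasDerivAt_log h1.ne').comp t ((hasDerivAt_id t).const_add 1)
    simpa [Function.comp_def] using this
  have d2 : HasDerivAt (fun s : ℝ => Real.log (x + s)) (x + t)⁻¹ t := by
    have := (Real.hasDerivAt_log h2.ne').comp t ((hasDerivAt_id t).const_add x)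
    simpa [Function.comp_def] using this
  exact d1.sub d2

lemma log_tendsto_aux {x : ℝ} (hx : 0 < x) :
    Tendsto (fun s => Real.log (1 + s) - Real.log (x + s)) atTop (nhds 0) := by
  have h1 : Tendsto (fun s : ℝ => (1 + s) / (x + s)) atTop (nhds 1) := by
    have hd : Tendsto (fun s : ℝ => (1 - x) / (x + s)) atTop (nhds 0) :=
      Tendsto.div_atTop tendsto_const_nhds (tendsto_atTop_add_const_left _ x tendsto_id)
    have h2 : Tendsto (fun s : ℝ => 1 + (1 - x) / (x + s)) atTop (nhds 1) := by
      simpa using tendsto_const_nhds.add hd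
    refine h2.congr' ?_
    filter_upwards [eventually_gt_atTop (max 0 (1 - x))] with s hs
    have hxs : (0:ℝ) < x + s := by
      have := lt_of_le_of_lt (le_max_left 0 (1-x)) hs; linarith
    field_simp
    ring
  have h2 : Tendsto (fun s => Real.log ((1 + s) / (x + s))) atTop (nhds 0) := by
    have := (Real.continuousAt_log one_ne_zero).tendsto.comp h1
    simpa [Function.comp_def] using this
  refine h2.congr' ?_
  filter_upwards [eventually_ge_atTop (0:ℝ)] with s hs
  rw [Real.log_div (by linarith) (by linarith)]

lemma log_integrable_aux {x : ℝ} (hx : 0 < x) :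
    IntegrableOn (fun t => (1 + t)⁻¹ - (x + t)⁻¹) (Ioi 0) := by
  rcases le_or_gt 1 x with hx1 | hx1
  · exact integrableOn_Ioi_deriv_of_nonneg' (log_deriv_aux hx)
      (fun t ht => by
        have h1 : (0:ℝ) < 1 + t := by have := ht.out; linarith
        have h2 : (0:ℝ) < x + t := by have := ht.out; linarith
        have h3 : (1:ℝ) + t ≤ x + t := by linarith
        have := inv_anti₀ h1 h3
        linarith)
      (log_tendsto_aux hx)
  · have h := integrableOn_Ioi_deriv_of_nonneg'
      (g := fun s => Real.log (x + s) - Real.log (1 + s))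
      (g' := fun t => (x + t)⁻¹ - (1 + t)⁻¹)
      (fun t ht => by simpa [Pi.neg_def] using ((log_deriv_aux hx t ht).neg.congr_deriv (show _ = (x + t)⁻¹ - (1 + t)⁻¹ by ring)))
      (fun t ht => by
        have h1 : (0:ℝ) < 1 + t := by have := ht.out; linarith
        have h2 : (0:ℝ) < x + t := by have := ht.out; linarith
        have h3 : x + t ≤ 1 + t := by linarith
        have := inv_anti₀ h2 h3
        linarith)
      (by simpa using (log_tendsto_aux hx).neg)
    have h2 : IntegrableOn (fun t => -((x + t)⁻¹ - (1 + t)⁻¹)) (Ioi 0) := h.neg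
    exact h2.congr_fun (fun t ht => by ring) measurableSet_Ioi

lemma log_integral_aux {x : ℝ} (hx : 0 < x) :
    ∫ t in Ioi (0:ℝ), ((1 + t)⁻¹ - (x + t)⁻¹) = Real.log x := by
  have := integral_Ioi_of_hasDerivAt_of_tendsto' (log_deriv_aux hx)
    (log_integrable_aux hx) (log_tendsto_aux hx)
  simpa [Real.log_one] using this

/-! ### A mini-API for the Hermitian functional calculus over `ℝ` -/

namespace MatrixCfcAux
open Matrix

variable {n : Type*} [Fintype n] [DecidableEq n] {A : Matrix n n ℝ} (hA : A.IsHermitian)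

lemma cfcR_def (f : ℝ → ℝ) :
    hA.cfc f = (hA.eigenvectorUnitary : Matrix n n ℝ) * diagonal (f ∘ hA.eigenvalues)
      * star (hA.eigenvectorUnitary : Matrix n n ℝ) := by
  rw [Matrix.IsHermitian.cfc]; congr 2

lemma cfcR_herm (f : ℝ → ℝ) : (hA.cfc f).IsHermitian := by
  rw [cfcR_def]
  unfold Matrix.IsHermitian
  simp only [conjTranspose_mul, conjTranspose_conjTranspose, star_eq_conjTranspose,
    diagonal_conjTranspose, mul_assoc]
  congr 2

lemma cfcR_mul (f g : ℝ → ℝ) :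
    hA.cfc f * hA.cfc g = hA.cfc (fun x => f x * g x) := by
  rw [cfcR_def, cfcR_def, cfcR_def]
  have h1 : (star (hA.eigenvectorUnitary : Matrix n n ℝ)) * (hA.eigenvectorUnitary : Matrix n n ℝ) = 1 :=
    Unitary.coe_star_mul_self _
  calc (hA.eigenvectorUnitary : Matrix n n ℝ) * diagonal (f ∘ hA.eigenvalues)
      * star (hA.eigenvectorUnitary : Matrix n n ℝ) * ((hA.eigenvectorUnitary : Matrix n n ℝ)
      * diagonal (g ∘ hA.eigenvalues) * star (hA.eigenvectorUnitary : Matrix n n ℝ))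
      = (hA.eigenvectorUnitary : Matrix n n ℝ) * (diagonal (f ∘ hA.eigenvalues)
        * ((star (hA.eigenvectorUnitary : Matrix n n ℝ) * (hA.eigenvectorUnitary : Matrix n n ℝ))
        * diagonal (g ∘ hA.eigenvalues))) * star (hA.eigenvectorUnitary : Matrix n n ℝ) := by
        simp only [mul_assoc]
    _ = _ := by
        rw [h1, one_mul, diagonal_mul_diagonal]
        rfl

lemma cfcR_add (f g : ℝ → ℝ) :
    hA.cfc (fun x => f x + g x) = hA.cfc f + hA.cfc g := by
  simp only [cfcR_def]
  have : diagonal ((fun x => f x + g x) ∘ hA.eigenvalues)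
      = diagonal (f ∘ hA.eigenvalues) + diagonal (g ∘ hA.eigenvalues) := by
    exact (diagonal_add (f ∘ hA.eigenvalues) (g ∘ hA.eigenvalues)).symm
  rw [this, mul_add, add_mul]

lemma cfcR_smul (c : ℝ) (f : ℝ → ℝ) :
    hA.cfc (fun x => c * f x) = c • hA.cfc f := by
  simp only [cfcR_def]
  rw [show ((fun x => c * f x) ∘ hA.eigenvalues) = c • (f ∘ hA.eigenvalues) from rfl,
    diagonal_smul, Matrix.mul_smul, Matrix.smul_mul]

lemma cfcR_one : hA.cfc (fun _ => 1) = 1 := by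
  rw [cfcR_def]
  rw [show ((fun _ => (1:ℝ)) ∘ hA.eigenvalues) = (fun _ => (1:ℝ)) from rfl, diagonal_one, mul_one]
  exact Unitary.coe_mul_star_self _

lemma cfcR_id : hA.cfc (fun x => x) = A := by
  rw [cfcR_def]
  conv_rhs => rw [hA.spectral_theorem]
  congr 2

lemma cfcR_congr {f g : ℝ → ℝ} (h : ∀ i, f (hA.eigenvalues i) = g (hA.eigenvalues i)) :
    hA.cfc f = hA.cfc g := by
  rw [cfcR_def, cfcR_def]
  have : f ∘ hA.eigenvalues = g ∘ hA.eigenvalues := funext h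
  rw [this]

lemma cfcR_quad (f : ℝ → ℝ) (v : n → ℝ) :
    v ⬝ᵥ (hA.cfc f) *ᵥ v
      = ∑ i, f (hA.eigenvalues i) * ((star (hA.eigenvectorUnitary : Matrix n n ℝ) *ᵥ v) i)^2 := by
  rw [cfcR_def]
  set U := (hA.eigenvectorUnitary : Matrix n n ℝ)
  have h1 : (U * diagonal (f ∘ hA.eigenvalues) * star U) *ᵥ v
      = U *ᵥ (diagonal (f ∘ hA.eigenvalues) *ᵥ (star U *ᵥ v)) := by
    rw [← mulVec_mulVec, ← mulVec_mulVec]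
  rw [h1]
  have h2 : v ⬝ᵥ U *ᵥ (diagonal (f ∘ hA.eigenvalues) *ᵥ (star U *ᵥ v))
      = (star U *ᵥ v) ⬝ᵥ (diagonal (f ∘ hA.eigenvalues) *ᵥ (star U *ᵥ v)) := by
    rw [Matrix.dotProduct_mulVec v U]
    congr 1
    show v ᵥ* U = star U *ᵥ v
    ext i
    simp [Matrix.vecMul, Matrix.mulVec, dotProduct, star_eq_conjTranspose,
      Matrix.conjTranspose_apply, mul_comm]
  rw [h2]
  simp [dotProduct, Matrix.mulVec_diagonal, pow_two]
  ring_nf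
  exact Finset.sum_congr rfl fun i _ => by ring

lemma loewner_quad {B : Matrix n n ℝ} (h : (B - A).PosSemidef) (v : n → ℝ) :
    v ⬝ᵥ A *ᵥ v ≤ v ⬝ᵥ B *ᵥ v := by
  have := h.dotProduct_mulVec_nonneg v
  rw [star_trivial, Matrix.sub_mulVec, dotProduct_sub] at this
  linarith

lemma posSemidef_of_quad {B : Matrix n n ℝ} (hB : B.IsHermitian)
    (h : ∀ v : n → ℝ, 0 ≤ v ⬝ᵥ B *ᵥ v) : B.PosSemidef :=
  PosSemidef.of_dotProduct_mulVec_nonneg hB fun v => by rw [star_trivial]; exact h v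

lemma cfcR_weight_sum (v : n → ℝ) :
    ∑ i, ((star (hA.eigenvectorUnitary : Matrix n n ℝ) *ᵥ v) i)^2 = v ⬝ᵥ v := by
  have h := cfcR_quad hA (fun _ => 1) v
  rw [cfcR_one] at h
  simpa [Matrix.one_mulVec] using h.symm

lemma cfcR_psd {f : ℝ → ℝ} (h : ∀ i, 0 ≤ f (hA.eigenvalues i)) : (hA.cfc f).PosSemidef := by
  refine posSemidef_of_quad (cfcR_herm hA f) fun v => ?_
  rw [cfcR_quad]
  exact Finset.sum_nonneg fun i _ => mul_nonneg (h i) (sq_nonneg _)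

lemma cfcR_loewner {f g : ℝ → ℝ} (h : ∀ i, f (hA.eigenvalues i) ≤ g (hA.eigenvalues i)) :
    (hA.cfc g - hA.cfc f).PosSemidef := by
  have hsub : hA.cfc g - hA.cfc f = hA.cfc (fun x => g x + (-1) * f x) := by
    rw [cfcR_add, cfcR_smul]
    simp [sub_eq_add_neg]
  rw [hsub]
  exact cfcR_psd hA fun i => by have := h i; simp; linarith

lemma cfcR_posdef {f : ℝ → ℝ} (h : ∀ i, 0 < f (hA.eigenvalues i)) : (hA.cfc f).PosDef := by
  refine PosDef.of_dotProduct_mulVec_pos (cfcR_herm hA f) fun v hv => ?_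
  rw [star_trivial, cfcR_quad]
  set w := star (hA.eigenvectorUnitary : Matrix n n ℝ) *ᵥ v with hw
  have hwne : w ≠ 0 := by
    intro h0
    apply hv
    have : (hA.eigenvectorUnitary : Matrix n n ℝ) *ᵥ w = v := by
      rw [hw, Matrix.mulVec_mulVec, Matrix.mem_unitaryGroup_iff.mp hA.eigenvectorUnitary.2,
        Matrix.one_mulVec]
    rw [← this, h0, Matrix.mulVec_zero]
  obtain ⟨k, hk⟩ : ∃ k, w k ≠ 0 := by
    by_contra hall
    push_neg at hall
    exact hwne (funext hall)
  refine Finset.sum_pos' (fun i _ => mul_nonneg (h i).le (sq_nonneg _)) ⟨k, Finset.mem_univ k, ?_⟩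
  have : 0 < w k ^ 2 := by positivity
  exact mul_pos (h k) this

lemma cfcR_quad_col (f : ℝ → ℝ) (k : n) :
    (fun j => (hA.eigenvectorUnitary : Matrix n n ℝ) j k) ⬝ᵥ
      (hA.cfc f) *ᵥ (fun j => (hA.eigenvectorUnitary : Matrix n n ℝ) j k)
      = f (hA.eigenvalues k) := by
  rw [cfcR_quad]
  have hw : (star (hA.eigenvectorUnitary : Matrix n n ℝ) *ᵥ
      fun j => (hA.eigenvectorUnitary : Matrix n n ℝ) j k) = Pi.single k 1 := by
    ext i
    have h1 : (star (hA.eigenvectorUnitary : Matrix n n ℝ) *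
        (hA.eigenvectorUnitary : Matrix n n ℝ)) i k = (1 : Matrix n n ℝ) i k := by
      rw [Unitary.coe_star_mul_self]
    simpa [Matrix.mulVec, Matrix.mul_apply, Matrix.one_apply, Pi.single_apply, dotProduct]
      using h1
  rw [hw]
  rw [Fintype.sum_eq_single k fun i hi => by simp [Pi.single_apply, hi]]
  simp

lemma eig_le_of_loewner {B : Matrix n n ℝ} (h : (B - A).PosSemidef) (k : n)
    (hB1 : B = 1) : hA.eigenvalues k ≤ 1 := by
  have h1 := loewner_quad h (fun j => (hA.eigenvectorUnitary : Matrix n n ℝ) j k)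
  have h2 := cfcR_quad_col hA (fun x => x) k
  rw [cfcR_id] at h2
  have h3 := cfcR_quad_col hA (fun _ => 1) k
  rw [cfcR_one] at h3
  rw [h2, hB1, h3] at h1
  exact h1

lemma eig_nonpos_of_negPSD (hneg : (-A).PosSemidef) (k : n) : hA.eigenvalues k ≤ 0 := by
  have h1 := hneg.dotProduct_mulVec_nonneg (fun j => (hA.eigenvectorUnitary : Matrix n n ℝ) j k)
  rw [star_trivial, Matrix.neg_mulVec, dotProduct_neg] at h1
  have h2 := cfcR_quad_col hA (fun x => x) k
  rw [cfcR_id] at h2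
  rw [h2] at h1
  linarith

lemma cfcR_inv (hApd : A.PosDef) (hAeq : hApd.1 = hA := rfl) :
    A⁻¹ = hA.cfc (fun x => x⁻¹) := by
  apply Matrix.inv_eq_right_inv
  have key : hA.cfc (fun x => x) * hA.cfc (fun x => x⁻¹) = 1 := by
    rw [cfcR_mul, ← cfcR_one hA]
    apply cfcR_congr
    intro i
    have h0 := hApd.eigenvalues_pos i
    rw [hAeq] at h0
    field_simp
  rw [cfcR_id hA] at key
  exact key

lemma isHermitian_smulR {A : Matrix n n ℝ} (hA : A.IsHermitian) (c : ℝ) :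
    (c • A).IsHermitian := by
  unfold Matrix.IsHermitian at *
  rw [conjTranspose_smul, hA]
  congr

lemma psd_smul {A : Matrix n n ℝ} (hA : A.PosSemidef) {c : ℝ} (hc : 0 ≤ c) :
    (c • A).PosSemidef := by
  refine PosSemidef.of_dotProduct_mulVec_nonneg (isHermitian_smulR hA.1 c) fun v => ?_
  have := hA.dotProduct_mulVec_nonneg v
  rw [star_trivial] at *
  rw [Matrix.smul_mulVec, dotProduct_smul]
  exact mul_nonneg hc this

lemma inv_antitone {A C : Matrix n n ℝ} (hApd : A.PosDef) (hCpd : C.PosDef)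
    (h : (C - A).PosSemidef) : (A⁻¹ - C⁻¹).PosSemidef := by
  classical
  set hC : C.IsHermitian := hCpd.1
  set R : Matrix n n ℝ := hC.cfc (fun x => (Real.sqrt x)⁻¹) with hRdef
  set S : Matrix n n ℝ := hC.cfc Real.sqrt with hSdef
  have hsqrtpos : ∀ i, 0 < Real.sqrt (hC.eigenvalues i) :=
    fun i => Real.sqrt_pos.mpr (hCpd.eigenvalues_pos i)
  have hRherm : R.IsHermitian := cfcR_herm hC _
  have hSherm : S.IsHermitian := cfcR_herm hC _
  have hRS : R * S = 1 := by
    rw [hRdef, hSdef, cfcR_mul, ← cfcR_one hC]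
    exact cfcR_congr hC fun i => inv_mul_cancel₀ (hsqrtpos i).ne'
  have hSR : S * R = 1 := by
    rw [hRdef, hSdef, cfcR_mul, ← cfcR_one hC]
    exact cfcR_congr hC fun i => mul_inv_cancel₀ (hsqrtpos i).ne'
  have hSS : S * S = C := by
    rw [hSdef, cfcR_mul]
    exact (cfcR_congr hC fun i => Real.mul_self_sqrt (hCpd.eigenvalues_pos i).le).trans
      (cfcR_id hC)
  have hRCR : R * C * R = 1 := by
    rw [← hSS, show R * (S * S) * R = (R * S) * (S * R) by noncomm_ring, hRS, hSR, one_mul]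
  have hRpd : R.PosDef := cfcR_posdef hC fun i => inv_pos.mpr (hsqrtpos i)
  set Y : Matrix n n ℝ := R * A * R with hYdef
  have hYherm : Y.IsHermitian := by
    unfold Matrix.IsHermitian
    rw [hYdef, conjTranspose_mul, conjTranspose_mul, hRherm.eq, hApd.1.eq, mul_assoc]
  have hYquad : ∀ v : n → ℝ, v ⬝ᵥ Y *ᵥ v = (R *ᵥ v) ⬝ᵥ A *ᵥ (R *ᵥ v) := by
    intro v
    rw [hYdef, ← Matrix.mulVec_mulVec, ← Matrix.mulVec_mulVec, Matrix.dotProduct_mulVec v R]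
    congr 1
    ext i
    simp only [Matrix.vecMul, Matrix.mulVec, dotProduct]
    exact Finset.sum_congr rfl fun j _ => by
      rw [mul_comm]
      congr 1
      exact congrFun (congrFun hRherm.eq.symm i) j ▸ by
        simp [Matrix.conjTranspose_apply]
  have hYpd : Y.PosDef := by
    refine PosDef.of_dotProduct_mulVec_pos hYherm fun v hv => ?_
    rw [star_trivial, hYquad]
    refine lt_of_lt_of_eq (hApd.dotProduct_mulVec_pos (x := R *ᵥ v) ?_) (by rw [star_trivial])
    intro h0
    apply hv
    have h1 : S *ᵥ (R *ᵥ v) = v := by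
      rw [Matrix.mulVec_mulVec, hSR, Matrix.one_mulVec]
    rw [← h1, h0, Matrix.mulVec_zero]
  have hY1 : ((1 : Matrix n n ℝ) - Y).PosSemidef := by
    have hconj : (R * (C - A) * Rᴴ).PosSemidef := h.mul_mul_conjTranspose_same R
    rw [hRherm.eq] at hconj
    have : R * (C - A) * R = 1 - Y := by
      rw [Matrix.mul_sub, Matrix.sub_mul, hRCR, hYdef]
    rwa [this] at hconj
  have hYeig_pos := hYpd.eigenvalues_pos
  have hYeig_le : ∀ k, hYpd.1.eigenvalues k ≤ 1 := fun k => eig_le_of_loewner hYpd.1 hY1 k rfl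
  have hYinv : Y⁻¹ = hYpd.1.cfc (fun x => x⁻¹) := cfcR_inv hYpd.1 hYpd
  have h1Yinv : (Y⁻¹ - 1).PosSemidef := by
    rw [hYinv, ← cfcR_one hYpd.1]
    exact cfcR_loewner hYpd.1 fun i =>
      (one_le_inv_iff₀.mpr ⟨hYeig_pos i, hYeig_le i⟩ : _)
  have hYinvEq : Y⁻¹ = S * A⁻¹ * S := by
    apply Matrix.inv_eq_right_inv
    have hAAinv : A * A⁻¹ = 1 :=
      Matrix.mul_nonsing_inv A (isUnit_iff_ne_zero.mpr hApd.det_pos.ne')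
    calc Y * (S * A⁻¹ * S) = R * A * ((R * S) * A⁻¹) * S := by rw [hYdef]; noncomm_ring
      _ = R * (A * A⁻¹) * S := by rw [hRS]; noncomm_ring
      _ = R * S := by rw [hAAinv, mul_one]
      _ = 1 := hRS
  have hRR : R * R = C⁻¹ := by
    rw [hRdef, cfcR_mul]
    rw [cfcR_inv hC hCpd rfl]
    apply cfcR_congr
    intro i
    rw [← mul_inv]
    rw [Real.mul_self_sqrt (hCpd.eigenvalues_pos i).le]
  have hconj : (R * (Y⁻¹ - 1) * Rᴴ).PosSemidef := h1Yinv.mul_mul_conjTranspose_same R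
  rw [hRherm.eq] at hconj
  have hfin : R * (Y⁻¹ - 1) * R = A⁻¹ - C⁻¹ := by
    rw [Matrix.mul_sub, Matrix.sub_mul, hYinvEq, mul_one, hRR]
    congr 1
    calc R * (S * A⁻¹ * S) * R = (R * S) * A⁻¹ * (S * R) := by noncomm_ring
      _ = A⁻¹ := by rw [hRS, hSR, one_mul, mul_one]
  rwa [hfin] at hconj

lemma cfcR_shift (t : ℝ) : hA.cfc (fun x => x + t) = A + t • 1 := by
  have h1 : hA.cfc (fun x => x + t) = hA.cfc (fun x => x) + hA.cfc (fun _ => t) :=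
    cfcR_add hA _ _
  have h2 : hA.cfc (fun _ => t) = t • (1 : Matrix n n ℝ) := by
    have := cfcR_smul hA t (fun _ => 1)
    rw [cfcR_one] at this
    simpa [mul_one] using this
  rw [h1, h2, cfcR_id]

lemma cfcR_shift_posdef (hApd : A.PosDef) {t : ℝ} (ht : 0 ≤ t) (hAeq : hApd.1 = hA := rfl) :
    (A + t • 1).PosDef := by
  rw [← cfcR_shift hA t]
  exact cfcR_posdef hA fun i => by
    have := hApd.eigenvalues_pos i; rw [hAeq] at this; linarith

lemma cfcR_shift_inv (hApd : A.PosDef) {t : ℝ} (ht : 0 ≤ t) (hAeq : hApd.1 = hA := rfl) :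
    (A + t • 1)⁻¹ = hA.cfc (fun x => (x + t)⁻¹) := by
  apply Matrix.inv_eq_right_inv
  rw [← cfcR_shift hA t, cfcR_mul, ← cfcR_one hA]
  exact cfcR_congr hA fun i => mul_inv_cancel₀ (by
    have := hApd.eigenvalues_pos i; rw [hAeq] at this; linarith)

lemma log_monotone {A C : Matrix n n ℝ} (hApd : A.PosDef) (hCpd : C.PosDef)
    (h : (C - A).PosSemidef) :
    (hCpd.1.cfc Real.log - hApd.1.cfc Real.log).PosSemidef := by
  classical
  refine posSemidef_of_quad ((cfcR_herm hCpd.1 _).sub (cfcR_herm hApd.1 _)) fun v => ?_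
  rw [Matrix.sub_mulVec, dotProduct_sub, sub_nonneg]
  rw [cfcR_quad hApd.1, cfcR_quad hCpd.1]
  set a : n → ℝ := fun i => ((star (hApd.1.eigenvectorUnitary : Matrix n n ℝ) *ᵥ v) i)^2 with ha
  set c : n → ℝ := fun j => ((star (hCpd.1.eigenvectorUnitary : Matrix n n ℝ) *ᵥ v) j)^2 with hc
  have ha0 : ∀ i, 0 ≤ a i := fun i => sq_nonneg _
  have hc0 : ∀ j, 0 ≤ c j := fun j => sq_nonneg _
  have hsum : ∑ i, a i = ∑ j, c j := by
    rw [ha, hc, cfcR_weight_sum, cfcR_weight_sum]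
  set lam : n → ℝ := hApd.1.eigenvalues
  set mu : n → ℝ := hCpd.1.eigenvalues
  have hlam : ∀ i, 0 < lam i := hApd.eigenvalues_pos
  have hmu : ∀ j, 0 < mu j := hCpd.eigenvalues_pos
  set F : ℝ → ℝ := fun t => ∑ i, a i * ((1 + t)⁻¹ - (lam i + t)⁻¹) with hF
  set G : ℝ → ℝ := fun t => ∑ j, c j * ((1 + t)⁻¹ - (mu j + t)⁻¹) with hG
  have hFint : IntegrableOn F (Ioi 0) :=
    integrable_finset_sum _ fun i _ => (log_integrable_aux (hlam i)).const_mul _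
  have hGint : IntegrableOn G (Ioi 0) :=
    integrable_finset_sum _ fun j _ => (log_integrable_aux (hmu j)).const_mul _
  have hFval : ∫ t in Ioi (0:ℝ), F t = ∑ i, a i * Real.log (lam i) := by
    rw [hF, integral_finset_sum _ fun i _ => (log_integrable_aux (hlam i)).const_mul _]
    exact Finset.sum_congr rfl fun i _ => by
      rw [integral_const_mul, log_integral_aux (hlam i)]
  have hGval : ∫ t in Ioi (0:ℝ), G t = ∑ j, c j * Real.log (mu j) := by
    rw [hG, integral_finset_sum _ fun j _ => (log_integrable_aux (hmu j)).const_mul _]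
    exact Finset.sum_congr rfl fun j _ => by
      rw [integral_const_mul, log_integral_aux (hmu j)]
  have hpt : ∀ t ∈ Ioi (0:ℝ), F t ≤ G t := by
    intro t ht
    have ht0 : (0:ℝ) ≤ t := (le_of_lt ht)
    have hApdt := cfcR_shift_posdef hApd.1 hApd ht0 rfl
    have hCpdt := cfcR_shift_posdef hCpd.1 hCpd ht0 rfl
    have hLt : ((C + t • 1) - (A + t • 1)).PosSemidef := by
      have : (C + t • 1) - (A + t • 1) = C - A := by abel
      rw [this]; exact h
    have hinv := inv_antitone hApdt hCpdt hLt
    have hq := loewner_quad hinv v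
    rw [cfcR_shift_inv hApd.1 hApd ht0 rfl, cfcR_shift_inv hCpd.1 hCpd ht0 rfl] at hq
    rw [cfcR_quad hApd.1, cfcR_quad hCpd.1] at hq
    have hFt : F t = (∑ i, a i) * (1 + t)⁻¹ - ∑ i, (lam i + t)⁻¹ * a i := by
      rw [hF, Finset.sum_mul]
      rw [← Finset.sum_sub_distrib]
      exact Finset.sum_congr rfl fun i _ => by ring
    have hGt : G t = (∑ j, c j) * (1 + t)⁻¹ - ∑ j, (mu j + t)⁻¹ * c j := by
      rw [hG, Finset.sum_mul, ← Finset.sum_sub_distrib]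
      exact Finset.sum_congr rfl fun j _ => by ring
    rw [hFt, hGt, hsum]
    linarith
  have hmono : ∫ t in Ioi (0:ℝ), F t ≤ ∫ t in Ioi (0:ℝ), G t :=
    setIntegral_mono_on hFint hGint measurableSet_Ioi hpt
  rw [hFval, hGval] at hmono
  calc ∑ i, Real.log (lam i) * a i = ∑ i, a i * Real.log (lam i) := by
        exact Finset.sum_congr rfl fun i _ => mul_comm _ _
    _ ≤ ∑ j, c j * Real.log (mu j) := hmono
    _ = ∑ j, Real.log (mu j) * c j := Finset.sum_congr rfl fun j _ => mul_comm _ _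

end MatrixCfcAux

section MExpLemmas
open Matrix MeasureTheory MatrixCfcAux

variable {Ω : Type*} [MeasurableSpace Ω] (P : MeasureTheory.Measure Ω) {d : ℕ}

lemma integrable_quadM {H : Ω → Matrix (Fin d) (Fin d) ℝ}
    (hint : ∀ i j, Integrable (fun ω => H ω i j) P) (v : Fin d → ℝ) :
    Integrable (fun ω => v ⬝ᵥ (H ω) *ᵥ v) P := by
  have hfun : (fun ω => v ⬝ᵥ (H ω) *ᵥ v) = fun ω => ∑ i, ∑ j, v i * (H ω i j * v j) := by
    funext ω
    simp [dotProduct, Matrix.mulVec, Finset.mul_sum]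
  rw [hfun]
  exact integrable_finset_sum _ fun i _ =>
    integrable_finset_sum _ fun j _ => (((hint i j).mul_const (v j)).const_mul (v i))

lemma quad_mExp {H : Ω → Matrix (Fin d) (Fin d) ℝ}
    (hint : ∀ i j, Integrable (fun ω => H ω i j) P) (v : Fin d → ℝ) :
    v ⬝ᵥ (mExp P H) *ᵥ v = ∫ ω, v ⬝ᵥ (H ω) *ᵥ v ∂P := by
  have hfun : (fun ω => v ⬝ᵥ (H ω) *ᵥ v) = fun ω => ∑ i, ∑ j, v i * (H ω i j * v j) := by
    funext ω
    simp [dotProduct, Matrix.mulVec, Finset.mul_sum]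
  rw [hfun, integral_finset_sum _ fun i _ =>
    integrable_finset_sum _ fun j _ => (((hint i j).mul_const (v j)).const_mul (v i))]
  have h2 : ∀ i ∈ Finset.univ, ∫ ω, (∑ j, v i * (H ω i j * v j)) ∂P
      = ∑ j, v i * ((∫ ω, H ω i j ∂P) * v j) := by
    intro i _
    rw [integral_finset_sum _ fun j _ => (((hint i j).mul_const (v j)).const_mul (v i))]
    exact Finset.sum_congr rfl fun j _ => by
      rw [integral_const_mul, integral_mul_const]
  rw [Finset.sum_congr rfl h2]
  simp [mExp, dotProduct, Matrix.mulVec, Finset.mul_sum]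

lemma mExp_herm {H : Ω → Matrix (Fin d) (Fin d) ℝ} (hherm : ∀ ω, (H ω).IsHermitian) :
    (mExp P H).IsHermitian := by
  unfold Matrix.IsHermitian
  ext i j
  rw [conjTranspose_apply, star_trivial]
  show (∫ ω, H ω j i ∂P) = ∫ ω, H ω i j ∂P
  congr 1
  funext ω
  have h1 := hherm ω
  unfold Matrix.IsHermitian at h1
  calc H ω j i = (H ω)ᴴ i j := by rw [conjTranspose_apply, star_trivial]
    _ = H ω i j := by rw [h1]

lemma mExp_loewner {F G : Ω → Matrix (Fin d) (Fin d) ℝ}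
    (hF : ∀ i j, Integrable (fun ω => F ω i j) P) (hG : ∀ i j, Integrable (fun ω => G ω i j) P)
    (hFherm : ∀ ω, (F ω).IsHermitian) (hGherm : ∀ ω, (G ω).IsHermitian)
    (hle : ∀ ω, (G ω - F ω).PosSemidef) :
    (mExp P G - mExp P F).PosSemidef := by
  refine PosSemidef.of_dotProduct_mulVec_nonneg ((mExp_herm P hGherm).sub (mExp_herm P hFherm)) fun v => ?_
  rw [star_trivial, Matrix.sub_mulVec, dotProduct_sub, quad_mExp P hF v, quad_mExp P hG v,
    sub_nonneg]
  refine integral_mono (integrable_quadM P hF v) (integrable_quadM P hG v) fun ω => ?_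
  have h1 := (hle ω).dotProduct_mulVec_nonneg v
  rw [star_trivial, Matrix.sub_mulVec, dotProduct_sub] at h1
  linarith

end MExpLemmas

theorem matrix_psd_log_mgf_lower_bound
    {Ω : Type*} [MeasurableSpace Ω] (P : Measure Ω) [IsProbabilityMeasure P]
    {d : ℕ} (X : Ω → Matrix (Fin d) (Fin d) ℝ)
    (hXmeas : Measurable X) (hXpsd : ∀ ω, (X ω).PosSemidef)
    (V : Matrix (Fin d) (Fin d) ℝ) (hV : V.PosSemidef)
    -- the stated expectations exist
    (hintpow : ∀ (p : ℕ) (i j : Fin d), Integrable (fun ω => ((X ω) ^ p) i j) P)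
    (hintexp : ∀ (u : ℝ) (i j : Fin d), Integrable (fun ω => matExp (u • X ω) i j) P)
    -- second moment condition (Bernstein's condition for `p = 2`)
    (hmom : LoewnerLE (mExp P (fun ω => (X ω) ^ 2)) V)
    (u : ℝ) (hu : 0 ≤ u) :
    LoewnerLE (matLog (mExp P (fun ω => matExp ((-u) • X ω))))
      ((-u) • mExp P X + (u ^ 2 / 2) • V) := by
  classical
  open Matrix MatrixCfcAux in
  -- basic hermitian data
  have hXh : ∀ ω, (X ω).IsHermitian := fun ω => (hXpsd ω).1
  have hA'h : ∀ ω, ((-u) • X ω).IsHermitian := fun ω => isHermitian_smulR (hXh ω) _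
  have hEdef : ∀ ω, matExp ((-u) • X ω) = (hA'h ω).cfc Real.exp := fun ω => dif_pos (hA'h ω)
  have hEint : ∀ i j, Integrable (fun ω => matExp ((-u) • X ω) i j) P := hintexp (-u)
  have hX1int : ∀ i j, Integrable (fun ω => X ω i j) P := fun i j => by
    have h := hintpow 1 i j; simpa using h
  have hX2int : ∀ i j, Integrable (fun ω => ((X ω) ^ 2) i j) P := hintpow 2
  have hX2herm : ∀ ω, ((X ω) ^ 2).IsHermitian := fun ω => by
    unfold Matrix.IsHermitian
    rw [pow_two, conjTranspose_mul, (hXh ω).eq]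
  -- pointwise dominating matrix G ω
  set G : Ω → Matrix (Fin d) (Fin d) ℝ :=
    fun ω => 1 + (-u) • X ω + (u ^ 2 / 2) • (X ω) ^ 2 with hGdef
  have hGherm : ∀ ω, (G ω).IsHermitian := fun ω =>
    (Matrix.isHermitian_one.add (isHermitian_smulR (hXh ω) _)).add
      (isHermitian_smulR (hX2herm ω) _)
  have hGentry : ∀ i j, (fun ω => G ω i j)
      = fun ω => (1 : Matrix (Fin d) (Fin d) ℝ) i j
          + (-u) * X ω i j + (u ^ 2 / 2) * (((X ω) ^ 2) i j) := by
    intro i j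
    funext ω
    simp [hGdef, Matrix.add_apply, Matrix.smul_apply, smul_eq_mul]
  have hGint : ∀ i j, Integrable (fun ω => G ω i j) P := fun i j => by
    rw [hGentry i j]
    exact ((integrable_const _).add ((hX1int i j).const_mul _)).add ((hX2int i j).const_mul _)
  -- pointwise Loewner bound  exp((-u)X) ⪯ G
  have hptw : ∀ ω, (G ω - matExp ((-u) • X ω)).PosSemidef := by
    intro ω
    rw [hEdef ω]
    have hA2 : ((-u) • X ω) * ((-u) • X ω) = (u ^ 2) • ((X ω) ^ 2) := by
      rw [Matrix.smul_mul, Matrix.mul_smul, smul_smul, pow_two, pow_two]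
      congr 1
      ring
    have hcfcG : (hA'h ω).cfc (fun y => (1 + y) + (1/2) * (y * y)) = G ω := by
      rw [cfcR_add (hA'h ω) (fun y => 1 + y) (fun y => (1/2) * (y * y)),
        cfcR_add (hA'h ω) (fun _ => 1) (fun y => y),
        cfcR_one, cfcR_id, cfcR_smul (hA'h ω) (1/2) (fun y => y * y),
        ← cfcR_mul (hA'h ω) (fun y => y) (fun y => y), cfcR_id, hA2]
      rw [smul_smul]
      have h12 : (1/2 : ℝ) * u ^ 2 = u ^ 2 / 2 := by ring
      rw [h12]
    rw [← hcfcG]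
    apply cfcR_loewner
    intro i
    have hneg : (-((-u) • X ω)).PosSemidef := by
      have hcalc : -((-u) • X ω) = u • X ω := by
        rw [← neg_smul, neg_neg]
      rw [hcalc]
      exact psd_smul (hXpsd ω) hu
    have hy := eig_nonpos_of_negPSD (hA'h ω) hneg i
    have hq := exp_le_quadratic hy
    linarith
  -- hermitian-ness of the sample exponentials
  have hEherm : ∀ ω, (matExp ((-u) • X ω)).IsHermitian := fun ω => by
    rw [hEdef ω]; exact cfcR_herm _ _
  -- step 1 : M ⪯ E[G]
  have step1 : (mExp P G - mExp P (fun ω => matExp ((-u) • X ω))).PosSemidef :=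
    mExp_loewner P hEint hGint hEherm hGherm hptw
  -- identify E[G]
  have hmExpG : mExp P G
      = 1 + (-u) • mExp P X + (u ^ 2 / 2) • mExp P (fun ω => (X ω) ^ 2) := by
    ext i j
    show (∫ ω, G ω i j ∂P) = _
    rw [hGentry i j]
    have i1 : Integrable (fun ω => (1 : Matrix (Fin d) (Fin d) ℝ) i j + -u * X ω i j) P :=
      (integrable_const _).add ((hX1int i j).const_mul _)
    have i0 : Integrable (fun _ : Ω => (1 : Matrix (Fin d) (Fin d) ℝ) i j) P := integrable_const _
    rw [integral_add i1 ((hX2int i j).const_mul _),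
      integral_add i0 ((hX1int i j).const_mul _)]
    rw [integral_const, integral_const_mul, integral_const_mul]
    simp [Matrix.add_apply, Matrix.smul_apply, smul_eq_mul, measure_univ, mExp]
  -- abbreviations
  set EX := mExp P X with hEX
  set EX2 := mExp P (fun ω => (X ω) ^ 2) with hEX2
  set Bm := (-u) • EX + (u ^ 2 / 2) • V with hBm
  set M := mExp P (fun ω => matExp ((-u) • X ω)) with hMdef
  -- step 2 : E[G] ⪯ 1 + Bm
  have hmomPSD : (V - EX2).PosSemidef := hmom
  have step2 : ((1 + Bm) - mExp P G).PosSemidef := by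
    rw [hmExpG, hBm]
    have hre : (1 + ((-u) • EX + (u ^ 2 / 2) • V))
        - (1 + (-u) • EX + (u ^ 2 / 2) • EX2) = (u ^ 2 / 2) • (V - EX2) := by
      rw [smul_sub]; abel
    rw [hre]
    exact psd_smul hmomPSD (by positivity)
  have step12 : ((1 + Bm) - M).PosSemidef := by
    have h12 := step2.add step1
    rwa [sub_add_sub_cancel] at h12
  -- M is positive definite
  have hMherm : M.IsHermitian := mExp_herm P hEherm
  have hMpd : M.PosDef := by
    refine PosDef.of_dotProduct_mulVec_pos hMherm fun v hv => ?_
    rw [star_trivial, hMdef, quad_mExp P hEint v]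
    have hptpos : ∀ ω, 0 < v ⬝ᵥ (matExp ((-u) • X ω)) *ᵥ v := fun ω => by
      rw [hEdef ω]
      have h2 := (cfcR_posdef (hA'h ω) (f := Real.exp) fun i => Real.exp_pos _).dotProduct_mulVec_pos hv
      rwa [star_trivial] at h2
    have hintq := integrable_quadM P hEint v
    have hsupp : (Function.support fun ω => v ⬝ᵥ (matExp ((-u) • X ω)) *ᵥ v) = Set.univ :=
      Set.eq_univ_of_forall fun ω => (hptpos ω).ne'
    have := (integral_pos_iff_support_of_nonneg_ae
      (Filter.Eventually.of_forall fun ω => (hptpos ω).le) hintq).mpr (by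
        rw [hsupp, measure_univ]; norm_num)
    exact this
  -- Bm is hermitian
  have hEXherm : EX.IsHermitian := mExp_herm P hXh
  have hBmherm : Bm.IsHermitian := (isHermitian_smulR hEXherm _).add (isHermitian_smulR hV.1 _)
  -- step 3 : 1 + Bm ⪯ exp Bm
  have hmatExpBm : matExp Bm = hBmherm.cfc Real.exp := dif_pos hBmherm
  have hOneB : hBmherm.cfc (fun y => 1 + y) = 1 + Bm := by
    rw [cfcR_add hBmherm (fun _ => 1) (fun y => y), cfcR_one, cfcR_id]
  have step3 : (matExp Bm - (1 + Bm)).PosSemidef := by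
    rw [hmatExpBm, ← hOneB]
    exact cfcR_loewner hBmherm fun i => by
      have := Real.add_one_le_exp (hBmherm.eigenvalues i); linarith
  have hEBpd : (matExp Bm).PosDef := by
    rw [hmatExpBm]; exact cfcR_posdef hBmherm fun i => Real.exp_pos _
  -- combine : M ⪯ exp Bm
  have step4 : (matExp Bm - M).PosSemidef := by
    have h34 := step3.add step12
    rwa [sub_add_sub_cancel] at h34
  -- log is operator monotone
  have hlog := log_monotone hMpd hEBpd step4
  -- identify the matrix logarithms
  have hmatLogM : matLog M = hMpd.1.cfc Real.log := dif_pos hMpd.1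
  have hmatLogEB : matLog (matExp Bm) = hEBpd.1.cfc Real.log := dif_pos hEBpd.1
  have hlogexp : matLog (matExp Bm) = Bm := by
    have hBsa : IsSelfAdjoint Bm := hBmherm
    rw [hmatLogEB, ← Matrix.IsHermitian.cfc_eq, hmatExpBm, ← Matrix.IsHermitian.cfc_eq hBmherm]
    rw [← cfc_comp Real.log Real.exp Bm hBsa
      (Set.Finite.continuousOn ((Matrix.finite_real_spectrum (A := Bm)).image Real.exp) _)
      (Set.Finite.continuousOn (Matrix.finite_real_spectrum (A := Bm)) _)]
    rw [show Real.log ∘ Real.exp = id from funext Real.log_exp]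
    exact cfc_id ℝ Bm hBsa
  show (Bm - matLog M).PosSemidef
  rw [hmatLogM, ← hlogexp, hmatLogEB]
  exact hlog
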